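/- Let γ be a simple directed cycle of length p in the de Bruijn graph B(n−1,s), and let x₁x₂⋯x_p be the associated periodic token sequence of minimal period p (whose p consecutive cyclic length-n windows are the p distinct n-grams traversed by γ). Then for every j ≥ n: the p cyclic length-j windows of this periodic sequence are pairwise distinct; the induced j-gram distribution, which assigns mass 1/p to each of these p windows, is an extreme point of the polytope F_j of j-gram distributions satisfying flow balance; and distinct simple cycles in B(n−1,s) induce distinct j-gram distributions. -/

import Mathlib

/-!
`n`-gram distributions and flow balance on the de Bruijn graph.

We fix a finite alphabet `σ` with `s = |σ| ≥ 2` and an order `n = k + 1 ≥ 2`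
(so contexts have length `k = n − 1 ≥ 1`).  An `n`-gram is a function
`Fin (k+1) → σ`; a context is a function `Fin k → σ`.  For an `n`-gram `g`,
`gInit g` is its length-`k` prefix (the source vertex of the corresponding
de Bruijn edge) and `gTail g` its length-`k` suffix (the target vertex).
The `n`-gram `c·a` is `Fin.snoc c a` and `x·c` is `Fin.cons x c`; the shift
`σ(c,a)` is `gTail (Fin.snoc c a)`.
-/

open Finset

variable {σ : Type*}

/-- Length-`k` prefix of an `n`-gram (`n = k+1`): the source vertex of the edge. -/
def gInit {k : ℕ} (g : Fin (k + 1) → σ) : Fin k → σ := fun i => g i.castSucc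

/-- Length-`k` suffix of an `n`-gram: the target vertex of the edge; also the
shift map, `σ(c,a) = gTail (Fin.snoc c a)`. -/
def gTail {k : ℕ} (g : Fin (k + 1) → σ) : Fin k → σ := fun i => g i.succ

/-- An `n`-gram distribution: nonnegative and summing to `1`. -/
def IsDist [Fintype σ] [DecidableEq σ] {k : ℕ} (ρ : (Fin (k + 1) → σ) → ℝ) : Prop :=
  (∀ g, 0 ≤ ρ g) ∧ ∑ g, ρ g = 1

/-- `L(c) = Σ_a ρ(c·a)`: mass of `n`-grams beginning with context `c`. -/
def Lmass [Fintype σ] [DecidableEq σ] {k : ℕ}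
    (ρ : (Fin (k + 1) → σ) → ℝ) (c : Fin k → σ) : ℝ :=
  ∑ a, ρ (Fin.snoc c a)

/-- `R(c) = Σ_x ρ(x·c)`: mass of `n`-grams ending with context `c`. -/
def Rmass [Fintype σ] [DecidableEq σ] {k : ℕ}
    (ρ : (Fin (k + 1) → σ) → ℝ) (c : Fin k → σ) : ℝ :=
  ∑ x, ρ (Fin.cons x c)

/-- Flow balance: `L(c) = R(c)` for every context `c`. -/
def FlowBalance [Fintype σ] [DecidableEq σ] {k : ℕ}
    (ρ : (Fin (k + 1) → σ) → ℝ) : Prop :=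
  ∀ c, Lmass ρ c = Rmass ρ c

/-- The polytope `F_n` of `n`-gram distributions satisfying flow balance
(the circulation polytope of the de Bruijn graph `B(n−1,s)`). -/
def FlowPolytope (σ : Type*) [Fintype σ] [DecidableEq σ] (k : ℕ) :
    Set ((Fin (k + 1) → σ) → ℝ) :=
  {ρ | IsDist ρ ∧ FlowBalance ρ}

/-- A simple directed cycle in the de Bruijn graph `B(n−1,s)`: a cyclically ordered
list of `p ≥ 1` edges (`n`-grams) whose sources are pairwise distinct vertices and in
which the target of each edge is the source of the next. -/
structure SimpleCycle (σ : Type*) (k : ℕ) where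
  /-- number of edges (`n`-grams) traversed -/
  p : ℕ
  ppos : 0 < p
  /-- the traversed edges, in cyclic order -/
  edge : Fin p → (Fin (k + 1) → σ)
  /-- the cycle is simple: visited vertices are pairwise distinct -/
  simple : Function.Injective fun i => gInit (edge i)
  /-- consecutive edges are incident head-to-tail (cyclically) -/
  cyc : ∀ i : Fin p,
    gTail (edge i) = gInit (edge ⟨(i.val + 1) % p, Nat.mod_lt _ i.pos⟩)

attribute [local instance] Classical.propDecidable

/-- The cycle flow `f_γ`: the uniform distribution assigning mass `1/p` to each of the
`p` `n`-grams traversed by the simple cycle `γ`, and `0` to all others. -/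
noncomputable def cycleFlow {σ : Type*} {k : ℕ} (γ : SimpleCycle σ k) :
    (Fin (k + 1) → σ) → ℝ :=
  fun g => if g ∈ Set.range γ.edge then 1 / (γ.p : ℝ) else 0

attribute [local instance] Classical.propDecidable

/-- The `j`-gram distribution induced by a periodic word `w` of (minimal) period `p`:
the uniform distribution, with mass `1/p`, on the `p` cyclic length-`j` windows of `w`
(here `j = K + 1`). -/
noncomputable def windowDist {σ : Type*} (w : ℕ → σ) (p : ℕ) (K : ℕ) :
    (Fin (K + 1) → σ) → ℝ :=
  fun g => if ∃ i < p, ∀ t : Fin (K + 1), w (i + (t : ℕ)) = g t then 1 / (p : ℝ) else 0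

/-!
The length-`j` windows of `w` form a closed walk of `p` edges in the de Bruijn graph
`B(j−1,s)`; its vertices, the length-`(j−1)` windows, are pairwise distinct because their
length-`k` prefixes already are. Each of these vertices then has exactly one outgoing and one
incoming edge on the walk, so flow balance forces every member of `F_j` supported on the walk
to be constant along it, i.e. equal to the uniform distribution. As members of `F_j` are
nonnegative, both terms of a convex decomposition of the uniform distribution are supported on
the walk, which gives extremality. Finally, the support of the `j`-gram distribution is the set
of length-`j` windows, whose length-`n` prefixes are the `n`-grams of the cycle.
-/

theorem Function.Periodic.sum_range_comp_succ {M : Type*} [AddCommMonoid M] [IsRightCancelAdd M]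
    {f : ℕ → M} {p : ℕ} (hf : Function.Periodic f p) :
    ∑ i ∈ range p, f (i + 1) = ∑ i ∈ range p, f i := by
  have h := (sum_range_succ' f p).symm.trans (sum_range_succ f p)
  rwa [← zero_add p, hf 0, zero_add, add_left_inj] at h

theorem sum_eq_sum_of_eq_zero_off_image {ι β M : Type*} [Fintype β] [AddCommMonoid M]
    {s : Finset ι} {E : ι → β} (hE : Set.InjOn E s) {ρ : β → M} (hρ : ∀ g ∉ E '' s, ρ g = 0) :
    ∑ g, ρ g = ∑ i ∈ s, ρ (E i) := by
  classical
  rw [← sum_image hE]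
  exact (sum_subset (subset_univ _) fun g _ hg => hρ g (by simpa using hg)).symm

theorem sum_range_ite_modEq {M : Type*} [AddCommMonoid M] {f : ℕ → M} {p : ℕ} (hp : 0 < p)
    (hf : Function.Periodic f p) (i : ℕ) :
    ∑ j ∈ range p, (if j ≡ i [MOD p] then f j else 0) = f i := by
  rw [sum_eq_single_of_mem (i % p) (mem_range.2 (Nat.mod_lt i hp)), if_pos (Nat.mod_modEq i p),
    hf.map_mod_nat]
  intro j hj hji
  rw [if_neg fun h => hji (by rw [← h, Nat.mod_eq_of_lt (mem_range.1 hj)])]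

theorem mem_extremePoints_of_eq_of_support_subset {ι : Type*} {C : Set (ι → ℝ)} {x : ι → ℝ}
    (hC : ∀ y ∈ C, 0 ≤ y) (hx : x ∈ C) (hrigid : ∀ y ∈ C, (∀ i, x i = 0 → y i = 0) → y = x) :
    x ∈ Set.extremePoints ℝ C := by
  refine mem_extremePoints.2 ⟨hx, fun y₁ hy₁ y₂ hy₂ ⟨a, b, ha, hb, _, hxy⟩ => ?_⟩
  have hvanish : ∀ i, x i = 0 → y₁ i = 0 ∧ y₂ i = 0 := fun i hi => by
    have hsum : a * y₁ i + b * y₂ i = 0 := by simpa [← hxy] using hi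
    rw [add_eq_zero_iff_of_nonneg (mul_nonneg ha.le (hC y₁ hy₁ i))
      (mul_nonneg hb.le (hC y₂ hy₂ i))] at hsum
    exact ⟨(mul_eq_zero.1 hsum.1).resolve_left ha.ne', (mul_eq_zero.1 hsum.2).resolve_left hb.ne'⟩
  exact ⟨hrigid y₁ hy₁ fun i hi => (hvanish i hi).1, hrigid y₂ hy₂ fun i hi => (hvanish i hi).2⟩

theorem gInit_snoc {α : Type*} {K : ℕ} (c : Fin K → α) (a : α) :
    gInit (Fin.snoc c a : Fin (K + 1) → α) = c :=
  Fin.init_snoc (α := fun _ => α) a c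

theorem gTail_cons {α : Type*} {K : ℕ} (a : α) (c : Fin K → α) :
    gTail (Fin.cons a c : Fin (K + 1) → α) = c :=
  Fin.tail_cons (α := fun _ => α) a c

theorem Lmass_eq_sum_ite {α : Type*} [Fintype α] [DecidableEq α] {K : ℕ}
    (ρ : (Fin (K + 1) → α) → ℝ) (c : Fin K → α) :
    Lmass ρ c = ∑ g, if gInit g = c then ρ g else 0 := by
  rw [← Fintype.sum_equiv (Fin.snocEquiv fun _ => α)
    (fun x => if gInit (Fin.snoc x.2 x.1 : Fin (K + 1) → α) = c then ρ (Fin.snoc x.2 x.1) else 0) _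
    fun _ => rfl]
  simp [Fintype.sum_prod_type, gInit_snoc, Lmass]

theorem Rmass_eq_sum_ite {α : Type*} [Fintype α] [DecidableEq α] {K : ℕ}
    (ρ : (Fin (K + 1) → α) → ℝ) (c : Fin K → α) :
    Rmass ρ c = ∑ g, if gTail g = c then ρ g else 0 := by
  rw [← Fintype.sum_equiv (Fin.consEquiv fun _ => α)
    (fun x => if gTail (Fin.cons x.1 x.2 : Fin (K + 1) → α) = c then ρ (Fin.cons x.1 x.2) else 0) _
    fun _ => rfl]
  simp [Fintype.sum_prod_type, gTail_cons, Rmass]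

section Windows

variable {α : Type*}

def window (w : ℕ → α) (m i : ℕ) : Fin m → α := fun t => w (i + t)

def windows (w : ℕ → α) (p m : ℕ) : Set (Fin m → α) := window w m '' Set.Iio p

theorem mem_windows {w : ℕ → α} {p m : ℕ} {g : Fin m → α} :
    g ∈ windows w p m ↔ ∃ i < p, window w m i = g :=
  Iff.rfl

theorem windows_eq_setOf (w : ℕ → α) (p m : ℕ) :
    windows w p m = {g | ∃ i < p, ∀ t : Fin m, w (i + (t : ℕ)) = g t} := by
  ext g
  simp only [mem_windows, window, funext_iff, Set.mem_ofPred_eq]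

theorem window_eq_of_le {w u : ℕ → α} {m m' i j : ℕ} (hm : m ≤ m')
    (h : window w m' i = window u m' j) : window w m i = window u m j :=
  funext fun t => congrFun h (Fin.castLE hm t)

theorem Set.InjOn.window_of_le {w : ℕ → α} {m m' : ℕ} {s : Set ℕ}
    (hinj : Set.InjOn (window w m) s) (hm : m ≤ m') : Set.InjOn (window w m') s :=
  fun _ hi _ hj h => hinj hi hj (window_eq_of_le hm h)

theorem Function.Periodic.window {w : ℕ → α} {p : ℕ} (hper : Function.Periodic w p) (m : ℕ) :
    Function.Periodic (window w m) p :=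
  fun i => funext fun t => show w (i + p + t) = w (i + t) by rw [add_right_comm, hper]

theorem window_eq_window_iff_modEq {w : ℕ → α} {p m : ℕ} (hp : 0 < p)
    (hper : Function.Periodic w p) (hinj : Set.InjOn (window w m) (Set.Iio p)) {i j : ℕ} :
    window w m i = window w m j ↔ i ≡ j [MOD p] := by
  rw [← (hper.window m).map_mod_nat i, ← (hper.window m).map_mod_nat j]
  exact ⟨fun h => hinj (Nat.mod_lt i hp) (Nat.mod_lt j hp) h, fun h => congrArg _ h⟩

theorem gInit_window (w : ℕ → α) (K i : ℕ) : gInit (window w (K + 1) i) = window w K i := rfl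

theorem gTail_window (w : ℕ → α) (K i : ℕ) : gTail (window w (K + 1) i) = window w K (i + 1) :=
  funext fun t => congrArg w (by simp only [Fin.val_succ]; omega)

theorem windowDist_apply {w : ℕ → α} {p K : ℕ} (g : Fin (K + 1) → α) :
    windowDist w p K g = if g ∈ windows w p (K + 1) then 1 / (p : ℝ) else 0 := by
  simp only [windowDist, windows_eq_setOf, Set.mem_ofPred_eq]

theorem windowDist_window {w : ℕ → α} {p K i : ℕ} (hi : i < p) :
    windowDist w p K (window w (K + 1) i) = 1 / p := by
  rw [windowDist_apply, if_pos (mem_windows.2 ⟨i, hi, rfl⟩)]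

theorem windowDist_eq_zero {w : ℕ → α} {p K : ℕ} {g : Fin (K + 1) → α}
    (hg : g ∉ windows w p (K + 1)) : windowDist w p K g = 0 := by
  rw [windowDist_apply, if_neg hg]

end Windows

section WindowFlow

variable {α : Type*} [Fintype α] [DecidableEq α] {w : ℕ → α} {p K : ℕ}

theorem Lmass_eq_sum_range (hinj : Set.InjOn (window w (K + 1)) (Set.Iio p))
    {ρ : (Fin (K + 1) → α) → ℝ} (hρ : ∀ g ∉ windows w p (K + 1), ρ g = 0) (c : Fin K → α) :
    Lmass ρ c = ∑ i ∈ range p, if window w K i = c then ρ (window w (K + 1) i) else 0 := by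
  rw [Lmass_eq_sum_ite, sum_eq_sum_of_eq_zero_off_image (s := range p) (by rwa [coe_range])
    fun g hg => by rw [coe_range] at hg; simp only [hρ g hg, ite_self]]
  simp only [gInit_window]
  congr! 1

theorem Rmass_eq_sum_range (hinj : Set.InjOn (window w (K + 1)) (Set.Iio p))
    {ρ : (Fin (K + 1) → α) → ℝ} (hρ : ∀ g ∉ windows w p (K + 1), ρ g = 0) (c : Fin K → α) :
    Rmass ρ c = ∑ i ∈ range p, if window w K (i + 1) = c then ρ (window w (K + 1) i) else 0 := by
  rw [Rmass_eq_sum_ite, sum_eq_sum_of_eq_zero_off_image (s := range p) (by rwa [coe_range])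
    fun g hg => by rw [coe_range] at hg; simp only [hρ g hg, ite_self]]
  simp only [gTail_window]

theorem windowDist_mem_flowPolytope (hp : 0 < p) (hper : Function.Periodic w p)
    (hinj : Set.InjOn (window w (K + 1)) (Set.Iio p)) :
    windowDist w p K ∈ FlowPolytope α K := by
  have hsupp : ∀ g ∉ windows w p (K + 1), windowDist w p K g = 0 := fun _ => windowDist_eq_zero
  refine ⟨⟨fun g => ?_, ?_⟩, fun c => ?_⟩
  · rw [windowDist_apply]
    split_ifs <;> positivity
  · rw [sum_eq_sum_of_eq_zero_off_image (s := range p) (by rwa [coe_range])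
        (by rwa [coe_range]),
      sum_congr rfl fun i hi => windowDist_window (mem_range.1 hi), sum_const, card_range,
      nsmul_eq_mul, mul_one_div_cancel (by positivity)]
  · have hshift :=
      ((hper.window K).comp fun v => if v = c then (1 / p : ℝ) else 0).sum_range_comp_succ
    rw [Lmass_eq_sum_range hinj hsupp, Rmass_eq_sum_range hinj hsupp]
    calc _ = ∑ i ∈ range p, if window w K i = c then (1 / p : ℝ) else 0 :=
          sum_congr rfl fun i hi => by rw [windowDist_window (mem_range.1 hi)]
      _ = ∑ i ∈ range p, if window w K (i + 1) = c then (1 / p : ℝ) else 0 := hshift.symm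
      _ = _ := sum_congr rfl fun i hi => by rw [windowDist_window (mem_range.1 hi)]

theorem eq_windowDist_of_support_subset (hp : 0 < p) (hper : Function.Periodic w p)
    (hinj : Set.InjOn (window w K) (Set.Iio p)) {ρ : (Fin (K + 1) → α) → ℝ}
    (hρ : ρ ∈ FlowPolytope α K) (hsupp : ∀ g ∉ windows w p (K + 1), ρ g = 0) :
    ρ = windowDist w p K := by
  have hinjE := hinj.window_of_le K.le_succ
  set F : ℕ → ℝ := fun i => ρ (window w (K + 1) i)
  have hFper : Function.Periodic F p := (hper.window (K + 1)).comp ρ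
  have hL : ∀ i, Lmass ρ (window w K i) = F i := fun i => by
    simp only [Lmass_eq_sum_range hinjE hsupp, window_eq_window_iff_modEq hp hper hinj]
    exact sum_range_ite_modEq hp hFper i
  have hR : ∀ i, Rmass ρ (window w K (i + 1)) = F i := fun i => by
    simp only [Rmass_eq_sum_range hinjE hsupp, window_eq_window_iff_modEq hp hper hinj,
      (Nat.ModEq.refl 1).add_iff_right]
    exact sum_range_ite_modEq hp hFper i
  have hstep : ∀ i, F (i + 1) = F i := fun i => by rw [← hL, hρ.2, hR]
  have hconst : ∀ i, F i = F 0 := Nat.rec rfl fun i ih => (hstep i).trans ih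
  have hF0 : F 0 = 1 / p := by
    have hsum := hρ.1.2
    rw [sum_eq_sum_of_eq_zero_off_image (s := range p) (by rwa [coe_range])
      (by rwa [coe_range]), sum_congr rfl fun i _ => hconst i, sum_const, card_range,
      nsmul_eq_mul] at hsum
    field_simp
    linarith
  funext g
  by_cases hg : g ∈ windows w p (K + 1)
  · obtain ⟨i, hi, rfl⟩ := mem_windows.1 hg
    rw [windowDist_window hi, ← hF0, ← hconst i]
  · rw [windowDist_eq_zero hg, hsupp g hg]

theorem windowDist_mem_extremePoints (hp : 0 < p) (hper : Function.Periodic w p)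
    (hinj : Set.InjOn (window w K) (Set.Iio p)) :
    windowDist w p K ∈ Set.extremePoints ℝ (FlowPolytope α K) :=
  mem_extremePoints_of_eq_of_support_subset (fun _ hy => hy.1.1)
    (windowDist_mem_flowPolytope hp hper (hinj.window_of_le K.le_succ))
    fun _ hy hsupp => eq_windowDist_of_support_subset hp hper hinj hy fun g hg =>
      hsupp g (windowDist_eq_zero hg)

end WindowFlow

section WindowSupport

variable {α : Type*} {w w' : ℕ → α} {p p' K m : ℕ}

theorem windows_subset_of_windowDist_eq (hm : m ≤ K + 1)
    (h : windowDist w p K = windowDist w' p' K) : windows w p m ⊆ windows w' p' m := by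
  rintro _ ⟨i, hi, rfl⟩
  have hne : windowDist w' p' K (window w (K + 1) i) ≠ 0 := by
    rw [← h, windowDist_window hi]
    exact one_div_ne_zero (Nat.cast_ne_zero.2 (Nat.ne_zero_of_lt hi))
  obtain ⟨i', hi', hw⟩ := mem_windows.1 (not_imp_comm.1 windowDist_eq_zero hne)
  exact ⟨i', hi', window_eq_of_le hm hw⟩

theorem windows_eq_of_windowDist_eq (hm : m ≤ K + 1)
    (h : windowDist w p K = windowDist w' p' K) : windows w p m = windows w' p' m :=
  (windows_subset_of_windowDist_eq hm h).antisymm (windows_subset_of_windowDist_eq hm h.symm)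

end WindowSupport

theorem cycle_projections_extreme_general [Fintype σ] [DecidableEq σ]
    (k : ℕ) (p : ℕ) (hp : 0 < p) (w : ℕ → σ)
    (hper : ∀ i, w (i + p) = w i)
    (hsimple : ∀ i j, i < p → j < p →
      (∀ t : Fin k, w (i + (t : ℕ)) = w (j + (t : ℕ))) → i = j) :
    (∀ d : ℕ,
      (∀ i j, i < p → j < p →
        (∀ t : Fin (k + d + 1), w (i + (t : ℕ)) = w (j + (t : ℕ))) → i = j) ∧
      windowDist w p (k + d) ∈ Set.extremePoints ℝ (FlowPolytope σ (k + d))) ∧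
    (∀ (p' : ℕ) (w' : ℕ → σ), 0 < p' → (∀ i, w' (i + p') = w' i) →
      (∀ i j, i < p' → j < p' →
        (∀ t : Fin k, w' (i + (t : ℕ)) = w' (j + (t : ℕ))) → i = j) →
      {g : Fin (k + 1) → σ | ∃ i < p, ∀ t : Fin (k + 1), w (i + (t : ℕ)) = g t} ≠
        {g : Fin (k + 1) → σ | ∃ i < p', ∀ t : Fin (k + 1), w' (i + (t : ℕ)) = g t} →
      ∀ d : ℕ, windowDist w p (k + d) ≠ windowDist w' p' (k + d)) := by
  have hinj : Set.InjOn (window w k) (Set.Iio p) := fun i hi j hj h =>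
    hsimple i j hi hj (congrFun h)
  refine ⟨fun d => ⟨fun i j hi hj h => (hinj.window_of_le (by omega)) hi hj (funext h),
    windowDist_mem_extremePoints hp hper (hinj.window_of_le (by omega))⟩, ?_⟩
  intro p' w' _ _ _ hne d h
  rw [← windows_eq_setOf, ← windows_eq_setOf] at hne
  exact hne (windows_eq_of_windowDist_eq (by omega) h)

/-- Let `γ` be a simple directed cycle of length `p` in the de Bruijn
graph `B(n−1,s)` with `n = k+1`, presented as a periodic token sequence `w` of minimal
period `p` whose `p` cyclic length-`k` windows (the visited vertices) are pairwise
distinct.  Then for every `j = (k + d) + 1 ≥ n`: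
* the `p` cyclic length-`j` windows of `w` are pairwise distinct;
* the induced `j`-gram distribution (mass `1/p` on each of these windows) is an
  extreme point of the polytope `F_j` of `j`-gram distributions satisfying flow
  balance; and
* distinct simple cycles (i.e. with different sets of traversed `n`-grams) induce
  distinct `j`-gram distributions. -/
theorem cycle_projections_extreme [Fintype σ] [DecidableEq σ]
    (k : ℕ) (hk : 1 ≤ k) (hs : 2 ≤ Fintype.card σ)
    (p : ℕ) (hp : 0 < p) (w : ℕ → σ)
    (hper : ∀ i, w (i + p) = w i)
    (hsimple : ∀ i j, i < p → j < p →
      (∀ t : Fin k, w (i + (t : ℕ)) = w (j + (t : ℕ))) → i = j) :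
    (∀ d : ℕ,
      (∀ i j, i < p → j < p →
        (∀ t : Fin (k + d + 1), w (i + (t : ℕ)) = w (j + (t : ℕ))) → i = j) ∧
      windowDist w p (k + d) ∈ Set.extremePoints ℝ (FlowPolytope σ (k + d))) ∧
    (∀ (p' : ℕ) (w' : ℕ → σ), 0 < p' → (∀ i, w' (i + p') = w' i) →
      (∀ i j, i < p' → j < p' →
        (∀ t : Fin k, w' (i + (t : ℕ)) = w' (j + (t : ℕ))) → i = j) →
      {g : Fin (k + 1) → σ | ∃ i < p, ∀ t : Fin (k + 1), w (i + (t : ℕ)) = g t} ≠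
        {g : Fin (k + 1) → σ | ∃ i < p', ∀ t : Fin (k + 1), w' (i + (t : ℕ)) = g t} →
      ∀ d : ℕ, windowDist w p (k + d) ≠ windowDist w' p' (k + d)) :=
  cycle_projections_extreme_general k p hp w hper hsimple
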